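/- arXiv:1503.02707 — 3 statements merged into one kernel-verified Lean document; each statement's English description precedes it below -/
import Mathlib

section
/- Let B₁ and B₂ be fuzzy ideals of a fuzzy Riesz space X with B₁ ∩ B₂ = {0} and X = B₁ + B₂ (so every x ∈ X decomposes uniquely as x = x₁ + x₂ with x₁ ∈ B₁, x₂ ∈ B₂). Then B₁ and B₂ are fuzzy bands satisfying B₁ = B₂^d and B₂ = B₁^d; in particular B₁ = B₁^{dd} and B₂ = B₂^{dd}. -/
/-!
Solid sets meeting only in `0` are disjoint, because `|a| ∧ |b|` lies in both. Everything else
comes from the inequality `|l| ∧ |w| ≤ |x| ∧ |w| + |x - l| ∧ |w|`. With `x = a + b`, `l = w = b`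
it shows that if `a ⊥ b` and `a + b ⊥ b` then `|b| ≤ 0`; so an element of `B₂ᵈ`, written
`a + b` with `a ∈ B₁`, `b ∈ B₂`, lies in `B₁`, and `B₁ = B₂ᵈ`. With `x = x_α ∈ Aᵈ`, `w ∈ A` it
makes `|l| ∧ |w|` a lower bound of any net `y_α ≥ |x_α - l|`, so an order limit `l` of such a
net is disjoint from `A`: disjoint complements are bands.
-/

/-- A fuzzy Riesz space structure on a real vector space `X`:
a fuzzy order `μ : X × X → [0,1]` compatible with the vector structure,
together with binary suprema and infima with respect to the fuzzy order. -/
structure FuzzyRiesz (X : Type*) [AddCommGroup X] [Module ℝ X] where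
  μ : X → X → ℝ
  nonneg : ∀ x y : X, 0 ≤ μ x y
  le_one : ∀ x y : X, μ x y ≤ 1
  refl : ∀ x : X, μ x x = 1
  antisymm : ∀ x y : X, 1 < μ x y + μ y x → x = y
  trans : ∀ x y z : X, min (μ x y) (μ y z) ≤ μ x z
  add_compat : ∀ x y z : X, 1/2 < μ x y → μ x y ≤ μ (x + z) (y + z)
  smul_compat : ∀ (x y : X) (c : ℝ), 0 ≤ c → 1/2 < μ x y → μ x y ≤ μ (c • x) (c • y)
  sup : X → X → X
  inf : X → X → X
  le_sup_left : ∀ x y : X, 1/2 < μ x (sup x y)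
  le_sup_right : ∀ x y : X, 1/2 < μ y (sup x y)
  sup_le : ∀ x y z : X, 1/2 < μ x z → 1/2 < μ y z → 1/2 < μ (sup x y) z
  inf_le_left : ∀ x y : X, 1/2 < μ (inf x y) x
  inf_le_right : ∀ x y : X, 1/2 < μ (inf x y) y
  le_inf : ∀ x y z : X, 1/2 < μ z x → 1/2 < μ z y → 1/2 < μ z (inf x y)

namespace FuzzyRiesz

universe v

variable {X : Type*} [AddCommGroup X] [Module ℝ X]

/-- The absolute value `|x| = x ∨ (−x)`. -/
def fabs (F : FuzzyRiesz X) (x : X) : X := F.sup x (-x)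

/-- `x` is positive: `μ(0,x) > 1/2`. -/
def Pos (F : FuzzyRiesz X) (x : X) : Prop := 1/2 < F.μ 0 x

/-- `S⁺`, the set of positive elements of `S`. -/
def posPart (F : FuzzyRiesz X) (S : Set X) : Set X := {x ∈ S | F.Pos x}

/-- `y` is an upper bound of `A`. -/
def UpperBound (F : FuzzyRiesz X) (A : Set X) (y : X) : Prop := ∀ x ∈ A, 1/2 < F.μ x y

/-- `y` is a lower bound of `A`. -/
def LowerBound (F : FuzzyRiesz X) (A : Set X) (y : X) : Prop := ∀ x ∈ A, 1/2 < F.μ y x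

/-- `z = sup A` in the fuzzy order. -/
def IsSup (F : FuzzyRiesz X) (A : Set X) (z : X) : Prop :=
  F.UpperBound A z ∧ ∀ y : X, F.UpperBound A y → 1/2 < F.μ z y

/-- `z = inf A` in the fuzzy order. -/
def IsInf (F : FuzzyRiesz X) (A : Set X) (z : X) : Prop :=
  F.LowerBound A z ∧ ∀ y : X, F.LowerBound A y → 1/2 < F.μ y z

/-- `z = inf A`, computed relative to the subset `Y` (lower bounds taken in `Y`). -/
def IsInfIn (F : FuzzyRiesz X) (Y A : Set X) (z : X) : Prop :=
  F.LowerBound A z ∧ ∀ y ∈ Y, F.LowerBound A y → 1/2 < F.μ y z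

/-- A set is fuzzy solid if `μ(|x|,|y|) > 1/2` and `y ∈ A` imply `x ∈ A`. -/
def Solid (F : FuzzyRiesz X) (A : Set X) : Prop :=
  ∀ x y : X, 1/2 < F.μ (F.fabs x) (F.fabs y) → y ∈ A → x ∈ A

/-- A fuzzy ideal: a fuzzy solid vector subspace. -/
structure IsIdeal (F : FuzzyRiesz X) (I : Set X) : Prop where
  zero_mem : (0 : X) ∈ I
  add_mem : ∀ {x y : X}, x ∈ I → y ∈ I → x + y ∈ I
  smul_mem : ∀ (c : ℝ) {x : X}, x ∈ I → c • x ∈ I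
  solid : ∀ x y : X, 1/2 < F.μ (F.fabs x) (F.fabs y) → y ∈ I → x ∈ I

/-- A fuzzy ideal of the subspace `Y` (with the restricted fuzzy order and
vector structure): a vector subspace of `Y` that is solid relative to `Y`. -/
structure IsIdealIn (F : FuzzyRiesz X) (Y I : Set X) : Prop where
  subset : I ⊆ Y
  zero_mem : (0 : X) ∈ I
  add_mem : ∀ {x y : X}, x ∈ I → y ∈ I → x + y ∈ I
  smul_mem : ∀ (c : ℝ) {x : X}, x ∈ I → c • x ∈ I
  solid : ∀ x ∈ Y, ∀ y ∈ I, 1/2 < F.μ (F.fabs x) (F.fabs y) → x ∈ I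

/-- A decreasing net. -/
def Decreasing (F : FuzzyRiesz X) {ι : Type v} [Preorder ι] (y : ι → X) : Prop :=
  ∀ a b : ι, a ≤ b → 1/2 < F.μ (y b) (y a)

/-- An increasing net. -/
def Increasing (F : FuzzyRiesz X) {ι : Type v} [Preorder ι] (x : ι → X) : Prop :=
  ∀ a b : ι, a ≤ b → 1/2 < F.μ (x a) (x b)

/-- The net `x` converges in fuzzy order to `l`: there is a net `y` over the same
index set with `μ(|x_α − l|, y_α) > 1/2` for all `α` and `y_α ↓ 0`. -/
def FuzzyOrderConv (F : FuzzyRiesz X) {ι : Type v} [Preorder ι] (x : ι → X) (l : X) : Prop :=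
  ∃ y : ι → X, (∀ a, 1/2 < F.μ (F.fabs (x a - l)) (y a)) ∧ F.Decreasing y ∧
    F.IsInf (Set.range y) 0

/-- Fuzzy order convergence relative to the subset `Y` (the dominating net lies in `Y`
and its infimum is computed in `Y`). -/
def FuzzyOrderConvIn (F : FuzzyRiesz X) (Y : Set X) {ι : Type v} [Preorder ι]
    (x : ι → X) (l : X) : Prop :=
  ∃ y : ι → X, (∀ a, y a ∈ Y) ∧ (∀ a, 1/2 < F.μ (F.fabs (x a - l)) (y a)) ∧ F.Decreasing y ∧
    F.IsInfIn Y (Set.range y) 0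

/-- `S` is fuzzy σ-order closed: closed under fuzzy order limits of sequences in `S`. -/
def SigmaOrderClosed (F : FuzzyRiesz X) (S : Set X) : Prop :=
  ∀ (x : ℕ → X) (l : X), (∀ n, x n ∈ S) → F.FuzzyOrderConv x l → l ∈ S

/-- `S` is fuzzy order closed: closed under fuzzy order limits of nets in `S`. -/
def OrderClosed (F : FuzzyRiesz X) (S : Set X) : Prop :=
  ∀ (ι : Type v) [Preorder ι] [Nonempty ι] [IsDirected ι (· ≤ ·)],
    ∀ (x : ι → X) (l : X), (∀ a, x a ∈ S) → F.FuzzyOrderConv x l → l ∈ S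

/-- `S` is fuzzy order closed in the subspace `Y`. -/
def OrderClosedIn (F : FuzzyRiesz X) (Y S : Set X) : Prop :=
  ∀ (ι : Type v) [Preorder ι] [Nonempty ι] [IsDirected ι (· ≤ ·)],
    ∀ (x : ι → X) (l : X), (∀ a, x a ∈ S) → l ∈ Y → F.FuzzyOrderConvIn Y x l → l ∈ S

/-- A fuzzy band: a fuzzy order closed fuzzy ideal. -/
def IsBand (F : FuzzyRiesz X) (B : Set X) : Prop := F.IsIdeal B ∧ OrderClosed.{v} F B

/-- A fuzzy band of the subspace `Y`. -/
def IsBandIn (F : FuzzyRiesz X) (Y B : Set X) : Prop := F.IsIdealIn Y B ∧ OrderClosedIn.{v} F Y B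

/-- The disjoint complement `A^d = {x : |x| ∧ |y| = 0 for all y ∈ A}`. -/
def dcomp (F : FuzzyRiesz X) (A : Set X) : Set X :=
  {x : X | ∀ y ∈ A, F.inf (F.fabs x) (F.fabs y) = 0}

/-- The algebraic sum of two subsets. -/
def sumSet (A B : Set X) : Set X := {z : X | ∃ a ∈ A, ∃ b ∈ B, z = a + b}

/-- `S` is fuzzy order dense in `X`. -/
def OrderDense (F : FuzzyRiesz X) (S : Set X) : Prop :=
  ∀ x : X, x ≠ 0 → F.Pos x → ∃ y ∈ S, y ≠ 0 ∧ 1/2 < F.μ y x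

/-- `S` is fuzzy order dense in the subspace `Y`. -/
def OrderDenseIn (F : FuzzyRiesz X) (Y S : Set X) : Prop :=
  ∀ x ∈ Y, x ≠ 0 → F.Pos x → ∃ y ∈ S, y ≠ 0 ∧ 1/2 < F.μ y x

/-- `x` is nonnegative: it is not the case that `μ(x,0) > 1/2`. -/
def Nonneg (F : FuzzyRiesz X) (x : X) : Prop := ¬ (1/2 < F.μ x 0)

/-- `X` is fuzzy Archimedean: for every nonzero nonnegative `x`, the set
`{λ • x : λ > 0}` has no upper bound. -/
def FuzzyArchimedean (F : FuzzyRiesz X) : Prop :=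
  ∀ x : X, x ≠ 0 → F.Nonneg x →
    ¬ ∃ y : X, F.UpperBound {z : X | ∃ c : ℝ, 0 < c ∧ z = c • x} y

/-- `X` is fuzzy Dedekind complete. -/
def DedekindComplete (F : FuzzyRiesz X) : Prop :=
  ∀ A : Set X, A.Nonempty → (∃ y, F.UpperBound A y) → ∃ z, F.IsSup A z

/-- `X` is fuzzy Dedekind σ-complete. -/
def DedekindSigmaComplete (F : FuzzyRiesz X) : Prop :=
  ∀ A : Set X, A.Nonempty → A.Countable →
    ((∃ y, F.UpperBound A y) → ∃ z, F.IsSup A z) ∧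
    ((∃ y, F.LowerBound A y) → ∃ z, F.IsInf A z)

/-- `D` is directed to the right. -/
def DirectedRight (F : FuzzyRiesz X) (D : Set X) : Prop :=
  ∀ E : Set X, E ⊆ D → E.Finite → ∃ d ∈ D, ∀ e ∈ E, 1/2 < F.μ e d

/-- `B` is a fuzzy projection band: a fuzzy band such that every `x ∈ X` decomposes
uniquely as `x = x₁ + x₂` with `x₁ ∈ B`, `x₂ ∈ B^d`. -/
def IsProjBand (F : FuzzyRiesz X) (B : Set X) : Prop :=
  IsBand.{v} F B ∧ ∀ x : X, ∃! p : X × X, p.1 ∈ B ∧ p.2 ∈ F.dcomp B ∧ x = p.1 + p.2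

/-- There is an increasing net of elements of `S`, over some nonempty directed
preordered index set, whose supremum is `l`. -/
def IncNetSup (F : FuzzyRiesz X) (S : Set X) (l : X) : Prop :=
  ∃ (ι : Type v) (r : ι → ι → Prop), Nonempty ι ∧ (∀ a, r a a) ∧
    (∀ a b c, r a b → r b c → r a c) ∧ (∀ a b, ∃ c, r a c ∧ r b c) ∧
    ∃ net : ι → X, (∀ a, net a ∈ S) ∧ (∀ a b, r a b → 1/2 < F.μ (net a) (net b)) ∧
      F.IsSup (Set.range net) l

end FuzzyRiesz

namespace FuzzyRiesz

theorem sumSet_comm {X : Type*} [AddCommGroup X] (A B : Set X) : sumSet A B = sumSet B A := by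
  ext x
  constructor <;> rintro ⟨a, ha, b, hb, rfl⟩ <;> exact ⟨b, hb, a, ha, add_comm a b⟩

variable {X : Type*} [AddCommGroup X] [Module ℝ X]

def Le (F : FuzzyRiesz X) (x y : X) : Prop := 1/2 < F.μ x y

variable {F : FuzzyRiesz X} {x y z : X}

theorem Le.refl (x : X) : F.Le x x := by
  unfold Le
  rw [F.refl]
  norm_num

theorem Le.trans (h₁ : F.Le x y) (h₂ : F.Le y z) : F.Le x z :=
  lt_of_lt_of_le (lt_min h₁ h₂) (F.trans x y z)

theorem Le.antisymm (h₁ : F.Le x y) (h₂ : F.Le y x) : x = y :=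
  F.antisymm x y (by unfold Le at h₁ h₂; linarith)

theorem Le.add_right (h : F.Le x y) (z : X) : F.Le (x + z) (y + z) :=
  lt_of_lt_of_le h (F.add_compat x y z h)

theorem Le.add {a b c d : X} (h₁ : F.Le a b) (h₂ : F.Le c d) : F.Le (a + c) (b + d) := by
  have h := h₂.add_right b
  rw [add_comm c b, add_comm d b] at h
  exact (h₁.add_right c).trans h

theorem Le.neg (h : F.Le x y) : F.Le (-y) (-x) := by
  convert h.add_right (-x + -y) using 1 <;> abel

theorem Le.smul {c : ℝ} (hc : 0 ≤ c) (h : F.Le x y) : F.Le (c • x) (c • y) :=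
  lt_of_lt_of_le h (F.smul_compat x y c hc h)

theorem le_fabs (x : X) : F.Le x (F.fabs x) := F.le_sup_left x (-x)

theorem neg_le_fabs (x : X) : F.Le (-x) (F.fabs x) := F.le_sup_right x (-x)

theorem fabs_nonneg (x : X) : F.Le 0 (F.fabs x) := by
  -- `0 = x + (-x) ≤ 2 • |x|`, then halve
  have h := ((le_fabs (F := F) x).add (neg_le_fabs x)).smul (c := 1/2) (by norm_num)
  rwa [add_neg_cancel, smul_zero, ← two_smul ℝ, smul_smul, one_div,
    inv_mul_cancel₀ two_ne_zero, one_smul] at h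

theorem fabs_of_nonneg (h : F.Le 0 x) : F.fabs x = x :=
  Le.antisymm (F.sup_le x (-x) x (Le.refl x) (Le.trans (by simpa using h.neg) h)) (le_fabs x)

theorem eq_zero_of_fabs_eq_zero (h : F.fabs x = 0) : x = 0 :=
  Le.antisymm (h ▸ le_fabs x) (by simpa using (h ▸ neg_le_fabs x : F.Le (-x) 0).neg)

theorem sup_comm (x y : X) : F.sup x y = F.sup y x :=
  Le.antisymm (F.sup_le x y _ (F.le_sup_right y x) (F.le_sup_left y x))
    (F.sup_le y x _ (F.le_sup_right x y) (F.le_sup_left x y))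

theorem fabs_neg (x : X) : F.fabs (-x) = F.fabs x := by
  rw [fabs, fabs, neg_neg, sup_comm]

theorem fabs_add_le (x y : X) : F.Le (F.fabs (x + y)) (F.fabs x + F.fabs y) :=
  F.sup_le _ _ _ ((le_fabs x).add (le_fabs y))
    (by rw [neg_add]; exact (neg_le_fabs x).add (neg_le_fabs y))

theorem inf_le_inf {a b a' b' : X} (ha : F.Le a a') (hb : F.Le b b') :
    F.Le (F.inf a b) (F.inf a' b') :=
  F.le_inf _ _ _ (Le.trans (F.inf_le_left a b) ha) (Le.trans (F.inf_le_right a b) hb)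

theorem inf_add (a b c : X) : F.inf a b + c = F.inf (a + c) (b + c) := by
  refine Le.antisymm
    (F.le_inf _ _ _ (Le.add_right (F.inf_le_left a b) c) (Le.add_right (F.inf_le_right a b) c)) ?_
  have h : F.Le (F.inf (a + c) (b + c) + -c) (F.inf a b) :=
    F.le_inf _ _ _ (by simpa using Le.add_right (F.inf_le_left (a + c) (b + c)) (-c) : F.Le _ a)
      (by simpa using Le.add_right (F.inf_le_right (a + c) (b + c)) (-c) : F.Le _ b)
  simpa using h.add_right c

theorem inf_add_le_add_inf {u v w : X} (hu : F.Le 0 u) (hv : F.Le 0 v) (hw : F.Le 0 w) :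
    F.Le (F.inf (u + v) w) (F.inf u w + F.inf v w) := by
  have le_add_w {p : X} (hp : F.Le 0 p) : F.Le (F.inf (u + v) w) (w + p) :=
    Le.trans (F.inf_le_right _ _) (by simpa [add_comm] using hp.add_right w)
  rw [inf_add u w, add_comm u (F.inf v w), inf_add v w u, add_comm w (F.inf v w), inf_add v w w]
  refine F.le_inf _ _ _ (F.le_inf _ _ _ ?_ ?_) (F.le_inf _ _ _ ?_ (le_add_w hw))
  · rw [add_comm v u]
    exact F.inf_le_left _ _
  · exact le_add_w hu
  · rw [add_comm v w]
    exact le_add_w hv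

theorem inf_fabs_le (x l w : X) :
    F.Le (F.inf (F.fabs l) (F.fabs w))
      (F.inf (F.fabs x) (F.fabs w) + F.inf (F.fabs (x - l)) (F.fabs w)) := by
  have htri : F.Le (F.fabs l) (F.fabs x + F.fabs (x - l)) := by
    have h := fabs_add_le (F := F) x (l - x)
    rwa [add_sub_cancel, ← fabs_neg (l - x), neg_sub] at h
  exact (inf_le_inf htri (Le.refl _)).trans
    (inf_add_le_add_inf (fabs_nonneg x) (fabs_nonneg _) (fabs_nonneg w))

variable {B₁ B₂ : Set X}

theorem subset_dcomp_of_inter_subset (h₁ : F.Solid B₁) (h₂ : F.Solid B₂)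
    (hcap : B₁ ∩ B₂ ⊆ {0}) : B₁ ⊆ F.dcomp B₂ := by
  intro a ha b hb
  set z := F.inf (F.fabs a) (F.fabs b)
  have hz : F.fabs z = z := fabs_of_nonneg (F.le_inf _ _ _ (fabs_nonneg a) (fabs_nonneg b))
  refine hcap ⟨h₁ z a ?_ ha, h₂ z b ?_ hb⟩
  · rw [hz]
    exact F.inf_le_left _ _
  · rw [hz]
    exact F.inf_le_right _ _

theorem dcomp_subset_of_sumSet_eq_univ (hsum : sumSet B₁ B₂ = Set.univ)
    (hdisj : B₁ ⊆ F.dcomp B₂) : F.dcomp B₂ ⊆ B₁ := by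
  intro x hx
  obtain ⟨a, ha, b, hb, rfl⟩ : x ∈ sumSet B₁ B₂ := hsum ▸ Set.mem_univ x
  have hb0 : b = 0 := by
    apply eq_zero_of_fabs_eq_zero
    have h := inf_fabs_le (F := F) (a + b) b b
    rw [hx b hb, add_sub_cancel_right, hdisj ha b hb, add_zero] at h
    exact Le.antisymm (Le.trans (F.le_inf _ _ _ (Le.refl _) (Le.refl _)) h) (fabs_nonneg b)
  simpa [hb0] using ha

theorem eq_dcomp_of_sumSet_eq_univ (h₁ : F.Solid B₁) (h₂ : F.Solid B₂)
    (hcap : B₁ ∩ B₂ ⊆ {0}) (hsum : sumSet B₁ B₂ = Set.univ) : B₁ = F.dcomp B₂ :=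
  have hdisj := subset_dcomp_of_inter_subset h₁ h₂ hcap
  hdisj.antisymm (dcomp_subset_of_sumSet_eq_univ hsum hdisj)

theorem dcomp_orderClosed.{w} (A : Set X) : OrderClosed.{w} F (F.dcomp A) := by
  rintro ι _ _ _ x l hx ⟨y, hdom, -, hinf⟩ w hw
  refine Le.antisymm (hinf.2 _ ?_) (F.le_inf _ _ _ (fabs_nonneg l) (fabs_nonneg w))
  rintro _ ⟨a, rfl⟩
  have h := inf_fabs_le (F := F) (x a) l w
  rw [hx a w hw, zero_add] at h
  exact h.trans (Le.trans (F.inf_le_left _ _) (hdom a))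

end FuzzyRiesz

universe u

/-- if `X = B₁ ⊕ B₂` for fuzzy ideals `B₁, B₂`, then `B₁` and `B₂`
are fuzzy bands with `B₁ = B₂^d`, `B₂ = B₁^d`, `B₁ = B₁^{dd}` and `B₂ = B₂^{dd}`. -/
theorem directSum_ideals_are_bands {X : Type*} [AddCommGroup X] [Module ℝ X]
    (F : FuzzyRiesz X) (B₁ B₂ : Set X) (h₁ : F.IsIdeal B₁) (h₂ : F.IsIdeal B₂)
    (hcap : B₁ ∩ B₂ = {0}) (hsum : FuzzyRiesz.sumSet B₁ B₂ = Set.univ) :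
    FuzzyRiesz.IsBand.{u} F B₁ ∧ FuzzyRiesz.IsBand.{u} F B₂ ∧
    B₁ = F.dcomp B₂ ∧ B₂ = F.dcomp B₁ ∧
    B₁ = F.dcomp (F.dcomp B₁) ∧ B₂ = F.dcomp (F.dcomp B₂) := by
  have e₁ : B₁ = F.dcomp B₂ :=
    FuzzyRiesz.eq_dcomp_of_sumSet_eq_univ h₁.solid h₂.solid hcap.subset hsum
  have e₂ : B₂ = F.dcomp B₁ := FuzzyRiesz.eq_dcomp_of_sumSet_eq_univ h₂.solid h₁.solid
    (Set.inter_comm B₁ B₂ ▸ hcap.subset) (FuzzyRiesz.sumSet_comm B₁ B₂ ▸ hsum)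
  refine ⟨⟨h₁, e₁ ▸ FuzzyRiesz.dcomp_orderClosed B₂⟩, ⟨h₂, e₂ ▸ FuzzyRiesz.dcomp_orderClosed B₁⟩,
    e₁, e₂, ?_, ?_⟩
  · rwa [← e₂]
  · rwa [← e₁]
end

section
/- Let D be a nonempty subset of a fuzzy Riesz space X. Then D^d = I_D^d = B_D^d, where I_D is the fuzzy ideal generated by D and B_D is the fuzzy band generated by D. -/
universe u

/-!
For a fixed `x`, the disjoint complement `{x}^d` is a fuzzy band. Read through the crisp
lattice order `x ≤ y ↔ μ(x,y) > 1/2`, it is a solid subspace because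
`(b + c) ∧ a ≤ b ∧ a + c ∧ a` for positive `a, b, c`, and it is order closed because
`x_α ⊥ x` gives `|l| ∧ |x| ≤ |x_α - l|`. Hence `x ∈ D^d ↔ D ⊆ {x}^d ↔ B_D ⊆ {x}^d`, so
`D^d = B_D^d`, and `D ⊆ I_D ⊆ B_D` squeezes `I_D^d` in between.
-/

section LatticeOrderedGroup

variable {α : Type*} [Lattice α] [AddCommGroup α] [IsOrderedAddMonoid α] {a b c x : α}

lemma add_inf_le_inf_add_inf (ha : 0 ≤ a) (hb : 0 ≤ b) (hc : 0 ≤ c) :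
    (b + c) ⊓ a ≤ b ⊓ a + c ⊓ a := by
  rw [inf_add, add_inf, add_inf]
  exact le_inf (le_inf inf_le_left (inf_le_right.trans (le_add_of_nonneg_left hb)))
    (le_inf (inf_le_right.trans (le_add_of_nonneg_right hc))
      (inf_le_right.trans (le_add_of_nonneg_right ha)))

lemma abs_inf_abs_eq_zero_of_abs_le (hab : |a| ≤ |b|) (hb : |b| ⊓ |x| = 0) : |a| ⊓ |x| = 0 :=
  le_antisymm (hb ▸ inf_le_inf_right _ hab) (le_inf (abs_nonneg a) (abs_nonneg x))

lemma abs_add_inf_abs_le (ha : |a| ⊓ |x| = 0) : |a + b| ⊓ |x| ≤ |b| ⊓ |x| :=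
  calc |a + b| ⊓ |x| ≤ (|a| + |b|) ⊓ |x| := inf_le_inf_right _ (abs_add_le a b)
    _ ≤ |a| ⊓ |x| + |b| ⊓ |x| := add_inf_le_inf_add_inf (abs_nonneg x) (abs_nonneg a) (abs_nonneg b)
    _ = |b| ⊓ |x| := by rw [ha, zero_add]

lemma abs_add_inf_abs_eq_zero (ha : |a| ⊓ |x| = 0) (hb : |b| ⊓ |x| = 0) :
    |a + b| ⊓ |x| = 0 :=
  le_antisymm (hb ▸ abs_add_inf_abs_le ha) (le_inf (abs_nonneg _) (abs_nonneg x))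

lemma abs_nsmul_inf_abs_eq_zero (n : ℕ) (ha : |a| ⊓ |x| = 0) : |n • a| ⊓ |x| = 0 := by
  induction n with
  | zero => simp
  | succ n ih => simpa only [succ_nsmul] using abs_add_inf_abs_eq_zero ih ha

lemma abs_inf_abs_le_of_abs_sub_le (ha : |a| ⊓ |x| = 0) (h : |b - a| ≤ c) : |b| ⊓ |x| ≤ c := by
  have := abs_add_inf_abs_le (b := b - a) ha
  rw [add_sub_cancel] at this
  exact this.trans (inf_le_left.trans h)

end LatticeOrderedGroup

section LatticeOrderedModule

variable {𝕜 α : Type*} [Ring 𝕜] [LinearOrder 𝕜] [IsOrderedRing 𝕜]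
  [Lattice α] [AddCommGroup α] [Module 𝕜 α] [PosSMulMono 𝕜 α]

lemma abs_smul_le (c : 𝕜) (a : α) : |c • a| ≤ |c| • |a| := by
  have key : ∀ c : 𝕜, 0 ≤ c → ∀ a : α, |c • a| ≤ c • |a| := fun c hc a =>
    abs_le'.2 ⟨smul_le_smul_of_nonneg_left (le_abs_self a) hc,
      by simpa only [smul_neg] using smul_le_smul_of_nonneg_left (neg_le_abs a) hc⟩
  rcases le_total 0 c with hc | hc
  · simpa only [abs_of_nonneg hc] using key c hc a
  · simpa only [abs_of_nonpos hc, neg_smul_neg, abs_neg] using key (-c) (neg_nonneg.2 hc) (-a)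

end LatticeOrderedModule

section RealLatticeOrderedModule

variable {α : Type*} [Lattice α] [AddCommGroup α] [IsOrderedAddMonoid α] [Module ℝ α]
  [PosSMulMono ℝ α] {a x : α}

lemma abs_smul_inf_abs_eq_zero (c : ℝ) (ha : |a| ⊓ |x| = 0) : |c • a| ⊓ |x| = 0 := by
  have h : |(⌈|c|⌉₊ • |a|)| ⊓ |x| = 0 := abs_nsmul_inf_abs_eq_zero _ (by rwa [abs_abs])
  refine abs_inf_abs_eq_zero_of_abs_le ?_ h
  calc |c • a| ≤ |c| • |a| := abs_smul_le c a
    _ ≤ (⌈|c|⌉₊ : ℝ) • |a| := smul_le_smul_of_nonneg_right (Nat.le_ceil _) (abs_nonneg a)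
    _ = |(⌈|c|⌉₊ • |a|)| := by
      rw [Nat.cast_smul_eq_nsmul, abs_of_nonneg (nsmul_nonneg (abs_nonneg a) _)]

end RealLatticeOrderedModule

namespace FuzzyRiesz

variable {X : Type*} [AddCommGroup X] [Module ℝ X] (F : FuzzyRiesz X)

/-- Its `⊔`, `⊓` and `|·|` are `F.sup`, `F.inf` and `F.fabs` definitionally, so lattice lemmas
transfer to the fuzzy notions by unfolding. -/
abbrev toLattice : Lattice X where
  le x y := 1/2 < F.μ x y
  le_refl x := by simp only [F.refl]; norm_num
  le_trans x y z hxy hyz := (lt_min hxy hyz).trans_le (F.trans x y z)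
  le_antisymm x y hxy hyx := F.antisymm x y (by linarith)
  sup := F.sup
  le_sup_left := F.le_sup_left
  le_sup_right := F.le_sup_right
  sup_le := F.sup_le
  inf := F.inf
  inf_le_left := F.inf_le_left
  inf_le_right := F.inf_le_right
  le_inf x y z := F.le_inf y z x

theorem isOrderedAddMonoid : letI := F.toLattice; IsOrderedAddMonoid X :=
  letI := F.toLattice
  { add_le_add_left := fun x y hxy z => hxy.trans_le (F.add_compat x y z hxy) }

theorem posSMulMono : letI := F.toLattice; PosSMulMono ℝ X :=
  letI := F.toLattice
  ⟨fun c hc x y hxy => hxy.trans_le (F.smul_compat x y c hc hxy)⟩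

theorem dcomp_anti {A B : Set X} (h : A ⊆ B) : F.dcomp B ⊆ F.dcomp A :=
  fun _ hx y hy => hx y (h hy)

theorem mem_dcomp_iff_subset_dcomp_singleton {x : X} {D : Set X} :
    x ∈ F.dcomp D ↔ D ⊆ F.dcomp {x} := by
  let := F.toLattice
  refine ⟨fun hx y hy z hz => ?_, fun h y hy => ?_⟩
  · rw [Set.mem_singleton_iff.1 hz]
    exact (inf_comm _ _).trans (hx y hy)
  · exact (inf_comm _ _).trans (h hy x rfl)

theorem dcomp_singleton_eq (x : X) :
    F.dcomp {x} = letI := F.toLattice; {y | |y| ⊓ |x| = 0} := by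
  simp only [dcomp, Set.mem_singleton_iff, forall_eq]
  rfl

theorem isIdeal_dcomp_singleton (x : X) : F.IsIdeal (F.dcomp {x}) := by
  let := F.toLattice
  have := F.isOrderedAddMonoid
  have := F.posSMulMono
  rw [dcomp_singleton_eq]
  exact
    { zero_mem := by simp
      add_mem := fun ha hb => abs_add_inf_abs_eq_zero ha hb
      smul_mem := fun c _ ha => abs_smul_inf_abs_eq_zero c ha
      solid := fun _ _ hab hb => abs_inf_abs_eq_zero_of_abs_le hab hb }

theorem orderClosed_dcomp_singleton (x : X) : OrderClosed.{u} F (F.dcomp {x}) := by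
  let := F.toLattice
  have := F.isOrderedAddMonoid
  rw [dcomp_singleton_eq]
  rintro ι _ _ _ n l hn ⟨z, hz, -, hz_inf⟩
  have h_lb : |l| ⊓ |x| ≤ 0 := hz_inf.2 _ <| Set.forall_mem_range.2 fun a =>
    abs_inf_abs_le_of_abs_sub_le (hn a) ((abs_sub_comm _ _).trans_le (hz a))
  exact h_lb.antisymm (_root_.le_inf (abs_nonneg l) (abs_nonneg x))

theorem isBand_dcomp_singleton (x : X) : IsBand.{u} F (F.dcomp {x}) :=
  ⟨F.isIdeal_dcomp_singleton x, F.orderClosed_dcomp_singleton x⟩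

end FuzzyRiesz

theorem dcomp_genIdeal_genBand_general {X : Type*} [AddCommGroup X] [Module ℝ X]
    (F : FuzzyRiesz X) (D : Set X) (ID BD : Set X)
    (hID : F.IsIdeal ID ∧ D ⊆ ID ∧ ∀ J : Set X, F.IsIdeal J → D ⊆ J → ID ⊆ J)
    (hBD : FuzzyRiesz.IsBand.{u} F BD ∧ D ⊆ BD ∧
      ∀ B : Set X, FuzzyRiesz.IsBand.{u} F B → D ⊆ B → BD ⊆ B) :
    F.dcomp D = F.dcomp ID ∧ F.dcomp D = F.dcomp BD := by
  obtain ⟨-, hD_ID, hID_min⟩ := hID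
  obtain ⟨hBD_band, hD_BD, hBD_min⟩ := hBD
  have hD_BDd : F.dcomp D ⊆ F.dcomp BD := fun x hx =>
    F.mem_dcomp_iff_subset_dcomp_singleton.2 <| hBD_min _ (F.isBand_dcomp_singleton x)
      (F.mem_dcomp_iff_subset_dcomp_singleton.1 hx)
  have hID_BD : ID ⊆ BD := hID_min BD hBD_band.1 hD_BD
  exact ⟨(hD_BDd.trans (F.dcomp_anti hID_BD)).antisymm (F.dcomp_anti hD_ID),
    hD_BDd.antisymm (F.dcomp_anti hD_BD)⟩

/-- `D^d = I_D^d = B_D^d` where `I_D` and `B_D` are the fuzzy ideal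
and the fuzzy band generated by a nonempty set `D`. -/
theorem dcomp_genIdeal_genBand {X : Type*} [AddCommGroup X] [Module ℝ X]
    (F : FuzzyRiesz X) (D : Set X) (hD : D.Nonempty) (ID BD : Set X)
    (hID : F.IsIdeal ID ∧ D ⊆ ID ∧ ∀ J : Set X, F.IsIdeal J → D ⊆ J → ID ⊆ J)
    (hBD : FuzzyRiesz.IsBand.{u} F BD ∧ D ⊆ BD ∧
      ∀ B : Set X, FuzzyRiesz.IsBand.{u} F B → D ⊆ B → BD ⊆ B) :
    F.dcomp D = F.dcomp ID ∧ F.dcomp D = F.dcomp BD :=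
  dcomp_genIdeal_genBand_general F D ID BD hID hBD
end

section
/- If X is a fuzzy Dedekind complete Riesz space, then X is fuzzy Archimedean. -/
/-! If `z = sup {c • x : c > 0}`, then `z - x` is again an upper bound, because
`c • x + x = (c + 1) • x ≤ z`. Hence `z ≤ z - x`, and translating by `x - z` gives `x ≤ 0`,
so `x` is not nonnegative. -/

namespace FuzzyRiesz

variable {X : Type*} [AddCommGroup X] [Module ℝ X] (F : FuzzyRiesz X)

def posMultiples (x : X) : Set X := {z : X | ∃ c : ℝ, 0 < c ∧ z = c • x}

theorem one_half_lt_μ_add_right {x y : X} (h : 1/2 < F.μ x y) (z : X) :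
    1/2 < F.μ (x + z) (y + z) :=
  h.trans_le (F.add_compat x y z h)

theorem one_half_lt_μ_zero_of_one_half_lt_μ_sub {x z : X} (h : 1/2 < F.μ z (z - x)) :
    1/2 < F.μ x 0 := by
  have := F.one_half_lt_μ_add_right h (x - z)
  rwa [add_sub_cancel, sub_add_sub_cancel, sub_self] at this

theorem upperBound_posMultiples_sub {x z : X} (hz : F.UpperBound (posMultiples x) z) :
    F.UpperBound (posMultiples x) (z - x) := by
  rintro _ ⟨c, hc, rfl⟩
  have := F.one_half_lt_μ_add_right (hz _ ⟨c + 1, by positivity, rfl⟩) (-x)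
  rwa [add_smul, one_smul, add_neg_cancel_right, ← sub_eq_add_neg] at this

end FuzzyRiesz

/-- a fuzzy Dedekind complete Riesz space is fuzzy Archimedean. -/
theorem dedekindComplete_archimedean {X : Type*} [AddCommGroup X] [Module ℝ X]
    (F : FuzzyRiesz X) (h : F.DedekindComplete) : F.FuzzyArchimedean := by
  rintro x - hx ⟨y, hy⟩
  obtain ⟨z, hz_ub, hz_least⟩ :=
    h (FuzzyRiesz.posMultiples x) ⟨x, 1, one_pos, (one_smul ℝ x).symm⟩ ⟨y, hy⟩
  exact hx <| F.one_half_lt_μ_zero_of_one_half_lt_μ_sub <|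
    hz_least _ (F.upperBound_posMultiples_sub hz_ub)
end
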